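/- arXiv:1605.07951 — 6 statements merged into one kernel-verified Lean document; each statement's English description precedes it below -/
import Mathlib

section
/- Let z_0,…,z_{N-1} be distinct complex numbers, ω_i the barycentric weights, and l(z) = ∏_{i=0}^{N-1}(z − z_i) the node polynomial. For every nonnegative integer α < N and every z ∈ ℂ with z ≠ z_i for all i, one has ∑_{i=0}^{N-1} ω_i z_i^α / (z_i − z) = − z^α / l(z). -/
/-!
The monomial `X ^ α` has degree `α < N`, so it coincides with its Lagrange interpolant on the
`N` nodes. Evaluating that interpolant off the nodes in the first barycentric form
`p(w) = l(w) ∑ ωᵢ p(zᵢ) / (w - zᵢ)` and dividing by `l(w) ≠ 0` gives the identity.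
-/

open Finset Polynomial

namespace Lagrange

variable {F ι : Type*} [Field F] [DecidableEq ι] {s : Finset ι} {v : ι → F}

theorem sum_nodalWeight_mul_eval_div_sub {p : F[X]} (hvs : Set.InjOn v s)
    (hp : p.degree < #s) {x : F} (hx : ∀ i ∈ s, x ≠ v i) :
    ∑ i ∈ s, nodalWeight s v i * p.eval (v i) / (v i - x) = -(p.eval x / (nodal s v).eval x) := by
  have hbary : p.eval x = (nodal s v).eval x *
      ∑ i ∈ s, nodalWeight s v i * (x - v i)⁻¹ * p.eval (v i) := by
    conv_lhs => rw [eq_interpolate hvs hp]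
    exact eval_interpolate_not_at_node _ hx
  rw [hbary, mul_div_cancel_left₀ _ (eval_nodal_not_at_node hx), ← sum_neg_distrib]
  refine sum_congr rfl fun i _ => ?_
  rw [← neg_sub x (v i), div_neg, div_eq_mul_inv]
  ring

end Lagrange

open Lagrange in
theorem barycentric_monomial_identity (N : ℕ) (z : Fin N → ℂ)
    (hz : Function.Injective z) (α : ℕ) (hα : α < N) (w : ℂ) (hw : ∀ i, w ≠ z i) :
    ∑ i : Fin N, (∏ j ∈ Finset.univ.erase i, (z i - z j))⁻¹ * z i ^ α / (z i - w) =
      - (w ^ α / ∏ i : Fin N, (w - z i)) := by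
  have hdeg : (X ^ α : ℂ[X]).degree < #(univ : Finset (Fin N)) := by
    rw [degree_X_pow, card_univ, Fintype.card_fin]
    exact_mod_cast hα
  have h := sum_nodalWeight_mul_eval_div_sub hz.injOn hdeg fun i _ => hw i
  simpa only [nodalWeight, prod_inv_distrib, eval_pow, eval_X, eval_nodal] using h
end

section
/- For the Chebyshev points of the first kind x_i = cos((2i+1)π/(2N)), i = 0,…,N−1, on [−1,1], the barycentric weights ω_i = 1/∏_{j≠i}(x_i − x_j) satisfy ω_i = c·(−1)^i sin((2i+1)π/(2N)) for some nonzero constant c independent of i. -/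
/-!
The Chebyshev points are the `N` distinct roots of `T_N`, whose leading coefficient is `2^(N-1)`,
so `T_N = 2^(N-1) ∏ⱼ (X - xⱼ)` and `ωᵢ = 2^(N-1) / T_N'(xᵢ)`. Differentiating
`T_N(cos θ) = cos (N θ)` gives `T_N'(cos θ) sin θ = N sin (N θ)`, and at `θᵢ = (2i+1)π/(2N)`
one has `sin (N θᵢ) = (-1)^i`. Hence `c = 2^(N-1) / N`.
-/

open Finset Real Polynomial Lagrange

theorem Lagrange.eq_C_leadingCoeff_mul_nodal {F ι : Type*} [Field F] {s : Finset ι} {v : ι → F}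
    {p : F[X]} (hv : Set.InjOn v s) (hdeg : p.natDegree = #s)
    (hroot : ∀ i ∈ s, p.eval (v i) = 0) : p = C p.leadingCoeff * nodal s v := by
  rcases eq_or_ne p 0 with rfl | hp
  · simp
  have hdeg' : p.degree = #s := by rw [degree_eq_natDegree hp, hdeg]
  have hq : (C p.leadingCoeff * nodal s v).degree = #s := by
    rw [degree_C_mul (leadingCoeff_ne_zero.mpr hp), degree_nodal]
  refine sub_eq_zero.mp (eq_zero_of_degree_lt_of_eval_index_eq_zero s hv ?_ fun i hi => ?_)
  · rw [← hdeg']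
    refine degree_sub_lt_left (hdeg'.trans hq.symm) hp ?_
    rw [leadingCoeff_mul, leadingCoeff_C, nodal_monic.leadingCoeff, mul_one]
  · simp [hroot i hi, eval_nodal_at_node hi]

theorem Lagrange.nodalWeight_eq_leadingCoeff_mul_inv_eval_derivative {F ι : Type*} [Field F]
    [DecidableEq ι] {s : Finset ι} {v : ι → F} {p : F[X]} (hv : Set.InjOn v s)
    (hdeg : p.natDegree = #s) (hroot : ∀ i ∈ s, p.eval (v i) = 0) {i : ι} (hi : i ∈ s) :
    nodalWeight s v i = p.leadingCoeff * ((derivative p).eval (v i))⁻¹ := by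
  have hp : p ≠ 0 := by
    rintro rfl
    simp only [natDegree_zero] at hdeg
    exact (card_ne_zero_of_mem hi) hdeg.symm
  have hfac := congrArg (fun q => (derivative q).eval (v i))
    (eq_C_leadingCoeff_mul_nodal hv hdeg hroot)
  simp only [derivative_C_mul, eval_mul, eval_C] at hfac
  rw [nodalWeight_eq_eval_derivative_nodal hi, hfac, mul_inv,
    mul_inv_cancel_left₀ (leadingCoeff_ne_zero.mpr hp)]

noncomputable def chebyshevAngle (N i : ℕ) : ℝ := (2 * i + 1) * π / (2 * N)

section chebyshevAngle

variable {N i : ℕ}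

lemma chebyshevAngle_mem_Ioo (hi : i < N) : chebyshevAngle N i ∈ Set.Ioo 0 π := by
  have hi' : (i : ℝ) + 1 ≤ N := by exact_mod_cast hi
  have hN : (0 : ℝ) < N := by linarith [(i.cast_nonneg : (0 : ℝ) ≤ i)]
  constructor
  · unfold chebyshevAngle; positivity
  · rw [chebyshevAngle, div_lt_iff₀ (by positivity)]
    nlinarith [pi_pos]

lemma natCast_mul_chebyshevAngle (hi : i < N) : N * chebyshevAngle N i = i * π + π / 2 := by
  have hN : (N : ℝ) ≠ 0 := by exact_mod_cast (i.zero_le.trans_lt hi).ne'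
  rw [chebyshevAngle]
  field_simp

lemma injective_cos_chebyshevAngle (N : ℕ) :
    Function.Injective fun i : Fin N => cos (chebyshevAngle N i) := by
  intro i j h
  have hIcc (k : Fin N) : chebyshevAngle N k ∈ Set.Icc 0 π :=
    Set.Ioo_subset_Icc_self (chebyshevAngle_mem_Ioo k.isLt)
  have := injOn_cos (hIcc i) (hIcc j) h
  have hN : (N : ℝ) ≠ 0 := by exact_mod_cast (i.pos).ne'
  simp only [chebyshevAngle] at this
  field_simp at this
  ext
  exact_mod_cast (by linarith : ((i : ℕ) : ℝ) = j)

lemma sin_chebyshevAngle_pos (hi : i < N) : 0 < sin (chebyshevAngle N i) :=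
  sin_pos_of_pos_of_lt_pi (chebyshevAngle_mem_Ioo hi).1 (chebyshevAngle_mem_Ioo hi).2

end chebyshevAngle

namespace Polynomial.Chebyshev

theorem eval_derivative_T_real_cos_mul_sin (n : ℤ) (θ : ℝ) :
    (derivative (T ℝ n)).eval (cos θ) * sin θ = n * sin (n * θ) := by
  rw [T_derivative_eq_U, eval_mul, eval_intCast, mul_assoc, U_real_cos]
  push_cast
  ring_nf

lemma eval_T_real_cos_chebyshevAngle {N i : ℕ} (hi : i < N) :
    (T ℝ N).eval (cos (chebyshevAngle N i)) = 0 := by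
  rw [T_real_cos, Int.cast_natCast, natCast_mul_chebyshevAngle hi, cos_add_pi_div_two,
    sin_nat_mul_pi, neg_zero]

lemma eval_derivative_T_real_cos_chebyshevAngle_mul_sin {N i : ℕ} (hi : i < N) :
    (derivative (T ℝ N)).eval (cos (chebyshevAngle N i)) * sin (chebyshevAngle N i) =
      N * (-1) ^ i := by
  rw [eval_derivative_T_real_cos_mul_sin, Int.cast_natCast, natCast_mul_chebyshevAngle hi,
    sin_add_pi_div_two, cos_nat_mul_pi]

end Polynomial.Chebyshev

open Polynomial.Chebyshev in
theorem chebyshev_barycentric_weights (N : ℕ) (hN : 1 ≤ N)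
    (x : Fin N → ℝ) (hx : ∀ i : Fin N, x i = Real.cos ((2 * (i : ℕ) + 1) * π / (2 * N))) :
    ∃ c : ℝ, c ≠ 0 ∧ ∀ i : Fin N,
      (∏ j ∈ Finset.univ.erase i, (x i - x j))⁻¹ =
        c * (-1) ^ (i : ℕ) * Real.sin ((2 * (i : ℕ) + 1) * π / (2 * N)) := by
  classical
  have hx' : x = fun i : Fin N => cos (chebyshevAngle N i) := funext hx
  have hN' : (N : ℝ) ≠ 0 := Nat.cast_ne_zero.mpr (by omega)
  refine ⟨2 ^ (N - 1) / N, by positivity, fun i => ?_⟩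
  have hroot (j : Fin N) (_ : j ∈ univ) : (T ℝ N).eval (x j) = 0 := by
    rw [hx']; exact eval_T_real_cos_chebyshevAngle j.isLt
  have hsin : sin (chebyshevAngle N i) ≠ 0 := (sin_chebyshevAngle_pos i.isLt).ne'
  have hinj : Function.Injective x := hx' ▸ injective_cos_chebyshevAngle N
  have hder := eval_derivative_T_real_cos_chebyshevAngle_mul_sin i.isLt
  rw [← eval_nodal, ← nodalWeight_eq_eval_nodal_erase_inv,
    nodalWeight_eq_leadingCoeff_mul_inv_eval_derivative hinj.injOn (by simp) hroot (mem_univ i),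
    leadingCoeff_T, Int.natAbs_natCast, hx', eq_div_of_mul_eq hsin hder]
  change _ = _ * _ * sin (chebyshevAngle N i)
  field_simp
  rw [← pow_mul, pow_mul', neg_one_sq, one_pow]
end

section
/- Let J_{λ,d} denote the d×d Jordan block with eigenvalue λ, and for distinct nodes z_i with barycentric weights ω_i define the d×d upper-triangular Toeplitz matrix Φ_{α,d}(λ) whose (r,s) entry is φ_{α,s−r+1}(λ) for s ≥ r and 0 otherwise, where φ_{α,j}(λ) = ∑_i ω_i z_i^α/(z_i − λ)^j. Then Φ_{α,d}(λ) = J_{λ,d} · Φ_{α−1,d}(λ) for all 1 ≤ α with α < N, provided λ is not a node. -/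
open Finset Matrix

/-- `φ_{α,j}(λ)` built from nodes `z` and barycentric weights. -/
noncomputable def phiRI (N : ℕ) (z : Fin N → ℂ) (α j : ℕ) (lam : ℂ) : ℂ :=
  ∑ i : Fin N, (∏ k ∈ Finset.univ.erase i, (z i - z k))⁻¹ * z i ^ α * ((z i - lam) ^ j)⁻¹

/-- `d × d` Jordan block with eigenvalue `lam`. -/
def jordanBlock (d : ℕ) (lam : ℂ) : Matrix (Fin d) (Fin d) ℂ :=
  fun r s => if (r : ℕ) = s then lam else if (s : ℕ) = r + 1 then 1 else 0

/-- Upper triangular Toeplitz matrix `Φ_{α,d}(lam)` with `(r,s)` entry `φ_{α,s-r+1}(lam)`. -/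
noncomputable def PhiRI (N : ℕ) (z : Fin N → ℂ) (α d : ℕ) (lam : ℂ) :
    Matrix (Fin d) (Fin d) ℂ :=
  fun r s => if (r : ℕ) ≤ s then phiRI N z α ((s : ℕ) - r + 1) lam else 0

/-!
Writing `z i = lam + (z i - lam)` in each term gives `φ_{α+1,j+1} = λ φ_{α,j+1} + φ_{α,j}`, which is
the entrywise form of `Φ_{α+1,d} = J_{λ,d} Φ_{α,d}` away from the diagonal. On the diagonal the
recurrence needs `φ_{α,0} = ∑ ω_i z_i^α = 0`, true for `α + 1 < N` because this sum is the
coefficient of `X^(N-1)` in the interpolant of `X^α`, i.e. in `X^α` itself.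
-/

open Polynomial in
theorem Lagrange.sum_pow_div_prod_sub_eq_zero {F ι : Type*} [Field F] [DecidableEq ι]
    {s : Finset ι} {v : ι → F} (hvs : Set.InjOn v s) {m : ℕ} (hm : m + 1 < #s) :
    ∑ i ∈ s, v i ^ m / ∏ j ∈ s.erase i, (v i - v j) = 0 := by
  have hdeg : (X ^ m : F[X]).degree < #s := by
    rw [degree_X_pow]
    exact_mod_cast (Nat.lt_succ_self m).trans hm
  have h := Lagrange.coeff_eq_sum hvs hdeg
  simp only [eval_pow, eval_X, coeff_X_pow] at h
  rw [← h, if_neg (by omega)]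

theorem phiRI_zero (N : ℕ) (z : Fin N → ℂ) (hz : Function.Injective z) (α : ℕ) (hα : α + 1 < N)
    (lam : ℂ) : phiRI N z α 0 lam = 0 := by
  have h := Lagrange.sum_pow_div_prod_sub_eq_zero (s := Finset.univ) hz.injOn
    (by rwa [Finset.card_univ, Fintype.card_fin])
  simpa [phiRI, div_eq_inv_mul] using h

theorem phiRI_succ_succ (N : ℕ) (z : Fin N → ℂ) (lam : ℂ) (hlam : ∀ i, lam ≠ z i) (α j : ℕ) :
    phiRI N z (α + 1) (j + 1) lam = lam * phiRI N z α (j + 1) lam + phiRI N z α j lam := by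
  simp only [phiRI, Finset.mul_sum, ← Finset.sum_add_distrib]
  refine Finset.sum_congr rfl fun i _ => ?_
  have hne : z i - lam ≠ 0 := sub_ne_zero.mpr (hlam i).symm
  field_simp
  ring

theorem jordanBlock_mul_apply (d : ℕ) (lam : ℂ) (M : Matrix (Fin d) (Fin d) ℂ) (r s : Fin d) :
    (jordanBlock d lam * M) r s
      = lam * M r s + (if h : (r : ℕ) + 1 < d then M ⟨r + 1, h⟩ s else 0) := by
  rw [Matrix.mul_apply]
  have hsplit : ∀ t : Fin d, jordanBlock d lam r t * M t s
      = (if t = r then lam * M t s else 0) + (if (t : ℕ) = r + 1 then M t s else 0) := by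
    intro t
    simp only [jordanBlock, Fin.ext_iff]
    split_ifs <;> first | omega | ring
  simp only [hsplit, Finset.sum_add_distrib, Finset.sum_ite_eq', Finset.mem_univ, if_true]
  congr 1
  split_ifs with h
  · simp only [← Fin.ext_iff (b := ⟨r + 1, h⟩), Finset.sum_ite_eq', Finset.mem_univ, if_true]
  · exact Finset.sum_eq_zero fun t _ => if_neg (by omega)

theorem PhiRI_succ_apply (N : ℕ) (z : Fin N → ℂ) (hz : Function.Injective z) (lam : ℂ)
    (hlam : ∀ i, lam ≠ z i) (α : ℕ) (hα : α + 2 ≤ N) (d : ℕ) (r s : Fin d) :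
    PhiRI N z (α + 1) d lam r s = lam * PhiRI N z α d lam r s
      + (if h : (r : ℕ) + 1 < d then PhiRI N z α d lam ⟨r + 1, h⟩ s else 0) := by
  simp only [PhiRI]
  by_cases hrs : (r : ℕ) ≤ s
  · obtain ⟨j, hj⟩ := Nat.exists_eq_add_of_le hrs
    have hnext : (if h : (r : ℕ) + 1 < d then
        (if (r : ℕ) + 1 ≤ s then phiRI N z α (s - (r + 1) + 1) lam else 0) else 0)
        = phiRI N z α j lam := by
      rcases j with _ | j
      · rw [phiRI_zero N z hz α (by omega)]
        split_ifs <;> first | rfl | omega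
      · rw [dif_pos (by omega), if_pos (by omega)]
        congr 1
        omega
    rw [if_pos hrs, if_pos hrs, hnext, show (s : ℕ) - r + 1 = j + 1 by omega,
      phiRI_succ_succ N z lam hlam]
  · rw [if_neg hrs, if_neg hrs]
    split_ifs <;> first | omega | simp

theorem Phi_jordan_recurrence (N : ℕ) (z : Fin N → ℂ) (hz : Function.Injective z)
    (d : ℕ) (lam : ℂ) (hlam : ∀ i, lam ≠ z i) (α : ℕ) (hα1 : 1 ≤ α) (hαN : α < N) :
    PhiRI N z α d lam = jordanBlock d lam * PhiRI N z (α - 1) d lam := by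
  obtain ⟨β, rfl⟩ := Nat.exists_eq_add_of_le' hα1
  ext r s
  rw [jordanBlock_mul_apply, Nat.add_sub_cancel, PhiRI_succ_apply N z hz lam hlam β hαN]
end

section
/- Conversely, in the setting H = V W^H, H^< = V Λ W^H with V, W ∈ ℂ^{m×p} of full column rank p: if λ ∈ ℂ and x ≠ 0 satisfy H^< x = λ H x and H x ≠ 0, then λ is an eigenvalue of Λ. -/
open Matrix

theorem Matrix.mulVec_injective_of_rank_eq_card {R m n : Type*} [CommRing R] [Nontrivial R]
    [Fintype n] (V : Matrix m n R) (hV : V.rank = Fintype.card n) :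
    Function.Injective V.mulVec :=
  mulVec_injective_iff.2 <| linearIndependent_iff_card_eq_finrank_span.2 <| by
    rw [← hV, rank_eq_finrank_span_cols]
    rfl

/-- The eigenvector is `B *ᵥ x`: injectivity of `V` cancels it from
`V *ᵥ Λ *ᵥ (B *ᵥ x) = lam • V *ᵥ (B *ᵥ x)`. -/
theorem Matrix.exists_mulVec_eq_smul_of_pencil {R m n k : Type*} [CommRing R] [Fintype n]
    [Fintype k] {V : Matrix m n R} (hV : Function.Injective V.mulVec) (Λ : Matrix n n R)
    (B : Matrix n k R) {lam : R} {x : k → R}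
    (hpencil : (V * Λ * B) *ᵥ x = lam • ((V * B) *ᵥ x)) (hVBx : (V * B) *ᵥ x ≠ 0) :
    ∃ y : n → R, y ≠ 0 ∧ Λ *ᵥ y = lam • y := by
  refine ⟨B *ᵥ x, fun hBx => hVBx ?_, hV ?_⟩
  · rw [← mulVec_mulVec, hBx, mulVec_zero]
  · simpa only [mulVec_smul, mulVec_mulVec, Matrix.mul_assoc] using hpencil

theorem pencil_eigenvalue_is_Lambda_eigenvalue_general (m p : ℕ)
    (V W : Matrix (Fin m) (Fin p) ℂ) (hV : V.rank = p)
    (Λ : Matrix (Fin p) (Fin p) ℂ) (lam : ℂ) (x : Fin m → ℂ)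
    (hpencil : (V * Λ * Wᴴ) *ᵥ x = lam • ((V * Wᴴ) *ᵥ x))
    (hHx : (V * Wᴴ) *ᵥ x ≠ 0) :
    ∃ y : Fin p → ℂ, y ≠ 0 ∧ Λ *ᵥ y = lam • y :=
  exists_mulVec_eq_smul_of_pencil
    (V.mulVec_injective_of_rank_eq_card (by rw [hV, Fintype.card_fin])) Λ Wᴴ hpencil hHx

theorem pencil_eigenvalue_is_Lambda_eigenvalue (m p : ℕ) (hp : 0 < p) (hpm : p ≤ m)
    (V W : Matrix (Fin m) (Fin p) ℂ) (hV : V.rank = p) (hW : W.rank = p)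
    (Λ : Matrix (Fin p) (Fin p) ℂ) (lam : ℂ) (x : Fin m → ℂ) (hx : x ≠ 0)
    (hpencil : (V * Λ * Wᴴ) *ᵥ x = lam • ((V * Wᴴ) *ᵥ x))
    (hHx : (V * Wᴴ) *ᵥ x ≠ 0) :
    ∃ y : Fin p → ℂ, y ≠ 0 ∧ Λ *ᵥ y = lam • y :=
  pencil_eigenvalue_is_Lambda_eigenvalue_general m p V W hV Λ lam x hpencil hHx
end

section
/- Let λ_1,…,λ_p ∈ ℂ be distinct, v_1,…,v_p ∈ ℂ^n, w_1,…,w_p ∈ ℂ^n, and suppose f(z) = ∑_{k=1}^p v_k w_kᴴ/(z − λ_k) (an n×n matrix-valued rational function with simple poles). Given distinct sampling points z_0,…,z_{N-1} disjoint from {λ_k} with barycentric weights ω_i, the moment A_α := ∑_i ω_i z_i^α f(z_i) satisfies A_α = −∑_{k=1}^p (λ_k^α / l(λ_k)) v_k w_kᴴ for all 0 ≤ α < N, where l(z) = ∏_i(z − z_i). -/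
/-!
Each term of `f` contributes the rank-one matrix `v k ⬝ (w k)ᴴ` with coefficient
`∑ i, ω_i z_i^α / (z_i - λ_k)`. Since `z^α` has degree `α < N`, it equals its Lagrange
interpolant on the nodes `z_i`, and evaluating the first barycentric form of that interpolant at
`λ_k` shows this coefficient to be `-λ_k^α / l(λ_k)`.
-/

open Finset Matrix Polynomial

namespace Lagrange

variable {F ι : Type*} [Field F] [DecidableEq ι] {s : Finset ι} {v : ι → F} {P : F[X]} {x : F}

theorem eval_eq_eval_nodal_mul_sum_nodalWeight (hvs : Set.InjOn v s) (hP : P.degree < #s)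
    (hx : ∀ i ∈ s, x ≠ v i) :
    P.eval x = (nodal s v).eval x * ∑ i ∈ s, nodalWeight s v i * (x - v i)⁻¹ * P.eval (v i) := by
  conv_lhs => rw [eq_interpolate hvs hP]
  exact eval_interpolate_not_at_node _ hx

theorem sum_nodalWeight_mul_eval_mul_inv_sub (hvs : Set.InjOn v s) (hP : P.degree < #s)
    (hx : ∀ i ∈ s, x ≠ v i) :
    ∑ i ∈ s, nodalWeight s v i * P.eval (v i) * (v i - x)⁻¹ = -(P.eval x / (nodal s v).eval x) := by
  rw [eval_eq_eval_nodal_mul_sum_nodalWeight hvs hP hx,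
    mul_div_cancel_left₀ _ (eval_nodal_not_at_node hx), ← sum_neg_distrib]
  refine sum_congr rfl fun i _ => ?_
  rw [← neg_sub x, inv_neg]
  ring

end Lagrange

theorem moments_of_simple_pole_resolvent_general (n p N : ℕ) (lam : Fin p → ℂ)
    (v w : Fin p → Fin n → ℂ)
    (z : Fin N → ℂ) (hz : Function.Injective z) (hzlam : ∀ i k, z i ≠ lam k)
    (α : ℕ) (hα : α < N)
    (f : ℂ → Matrix (Fin n) (Fin n) ℂ)
    (hf : ∀ u : ℂ, f u = ∑ k : Fin p, (u - lam k)⁻¹ • vecMulVec (v k) (star (w k))) :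
    ∑ i : Fin N, ((∏ j ∈ Finset.univ.erase i, (z i - z j))⁻¹ * z i ^ α) • f (z i)
      = ∑ k : Fin p,
          (-(lam k ^ α / ∏ i : Fin N, (lam k - z i))) • vecMulVec (v k) (star (w k)) := by
  have hdeg : (X ^ α : ℂ[X]).degree < #(univ : Finset (Fin N)) := by
    rw [degree_X_pow, card_univ, Fintype.card_fin]
    exact_mod_cast hα
  simp_rw [hf, smul_sum, smul_smul]
  rw [sum_comm]
  refine sum_congr rfl fun k _ => ?_
  rw [← sum_smul]
  congr 1
  have hmoment := Lagrange.sum_nodalWeight_mul_eval_mul_inv_sub hz.injOn hdeg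
    (x := lam k) fun i _ => (hzlam i k).symm
  simpa only [Lagrange.nodalWeight, Lagrange.eval_nodal, eval_pow, eval_X, prod_inv_distrib]
    using hmoment

theorem moments_of_simple_pole_resolvent (n p N : ℕ) (hn : 0 < n) (hp : 0 < p)
    (hN : 0 < N) (lam : Fin p → ℂ) (hlam : Function.Injective lam)
    (v w : Fin p → Fin n → ℂ)
    (z : Fin N → ℂ) (hz : Function.Injective z) (hzlam : ∀ i k, z i ≠ lam k)
    (α : ℕ) (hα : α < N)
    (f : ℂ → Matrix (Fin n) (Fin n) ℂ)
    (hf : ∀ u : ℂ, f u = ∑ k : Fin p, (u - lam k)⁻¹ • vecMulVec (v k) (star (w k))) :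
    ∑ i : Fin N, ((∏ j ∈ Finset.univ.erase i, (z i - z j))⁻¹ * z i ^ α) • f (z i)
      = ∑ k : Fin p,
          (-(lam k ^ α / ∏ i : Fin N, (lam k - z i))) • vecMulVec (v k) (star (w k)) :=
  moments_of_simple_pole_resolvent_general n p N lam v w z hz hzlam α hα f hf
end

section
/- In the simple-pole setting of the previous statement (moments A_α = V D Λ^α Wᴴ with D = diag(−1/l(λ_k)) and Λ = diag(λ_k)), if V, W ∈ ℂ^{n×p} have full column rank p and p·1 ≤ K, then the block Hankel matrices H = (A_{i+j})_{0≤i,j≤K−1} and H^< = (A_{i+j+1})_{0≤i,j≤K−1} satisfy: λ is an eigenvalue of the pencil (H^<, H) with H x ≠ 0 for the corresponding eigenvector implies λ ∈ {λ_1,…,λ_p}. -/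
/-!
The block Hankel matrices factor through the poles: with the observability matrix
`O = [C; C Λ; …; C Λ^(K-1)]` (here `C = V D`) and the controllability matrix
`R = [B, Λ B, …, Λ^(K-1) B]` (here `B = Wᴴ`), one has `H = O R` and `H^< = O Λ R`.
The top block of `O` is `V D`, which is injective, so `H^< x = μ H x` cancels to
`Λ (R x) = μ (R x)`, and `R x ≠ 0` because `H x ≠ 0`. Hence `μ` is an eigenvalue of the
diagonal matrix `Λ`.
-/

open Finset Matrix

namespace Matrix

variable {R ι m o : Type*} [Fintype ι]

theorem mulVec_injective_of_rank_eq_card_s19 [Field R] {A : Matrix m ι R}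
    (hA : A.rank = Fintype.card ι) : Function.Injective A.mulVec := by
  have hker : Module.finrank R (LinearMap.ker A.mulVecLin) = 0 := by
    have := LinearMap.finrank_range_add_finrank_ker A.mulVecLin
    rw [← Matrix.rank, hA, Module.finrank_fintype_fun_eq_card] at this
    omega
  rw [← Matrix.coe_mulVecLin, ← LinearMap.ker_eq_bot]
  exact Submodule.finrank_eq_zero.mp hker

theorem hasEigenvalue_toLin'_of_factored_pencil [CommRing R] [DecidableEq ι] [Fintype o]
    {F : Matrix m ι R} (hF : Function.Injective F.mulVec) {M : Matrix ι ι R}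
    {G : Matrix ι o R} {μ : R} {x : o → R}
    (hpencil : (F * M * G) *ᵥ x = μ • ((F * G) *ᵥ x)) (hx : (F * G) *ᵥ x ≠ 0) :
    Module.End.HasEigenvalue (toLin' M) μ := by
  have hGx : G *ᵥ x ≠ 0 := fun h => hx (by rw [← mulVec_mulVec, h, mulVec_zero])
  have hM : M *ᵥ (G *ᵥ x) = μ • (G *ᵥ x) :=
    hF (by rwa [mulVec_smul, mulVec_mulVec, mulVec_mulVec, mulVec_mulVec])
  exact Module.End.hasEigenvalue_of_hasEigenvector
    ⟨Module.End.mem_eigenspace_iff.2 (by simpa using hM), hGx⟩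

variable [DecidableEq ι] {n : ℕ}

def observabilityMatrix [Semiring R] (K : ℕ) (C : Matrix (Fin n) ι R) (M : Matrix ι ι R) :
    Matrix (Fin (K * n)) ι R :=
  fun r => (C * M ^ ((finProdFinEquiv.symm r).1 : ℕ)) (finProdFinEquiv.symm r).2

def controllabilityMatrix [Semiring R] (K : ℕ) (M : Matrix ι ι R) (B : Matrix ι (Fin n) R) :
    Matrix ι (Fin (K * n)) R :=
  fun k c => (M ^ ((finProdFinEquiv.symm c).1 : ℕ) * B) k (finProdFinEquiv.symm c).2

variable [CommSemiring R] {K : ℕ} {C : Matrix (Fin n) ι R} {M : Matrix ι ι R}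
  {B : Matrix ι (Fin n) R}

theorem observabilityMatrix_mul_mul_controllabilityMatrix_apply (N : Matrix ι ι R)
    (r c : Fin (K * n)) :
    (observabilityMatrix K C M * N * controllabilityMatrix K M B) r c =
      (C * M ^ ((finProdFinEquiv.symm r).1 : ℕ) * N *
        (M ^ ((finProdFinEquiv.symm c).1 : ℕ) * B))
        (finProdFinEquiv.symm r).2 (finProdFinEquiv.symm c).2 := by
  simp only [mul_apply]
  rfl

theorem eq_observabilityMatrix_mul_controllabilityMatrix {A : ℕ → Matrix (Fin n) (Fin n) R}
    (hA : ∀ α, A α = C * M ^ α * B) {H : Matrix (Fin (K * n)) (Fin (K * n)) R} (s : ℕ)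
    (hH : ∀ r c : Fin (K * n),
      H r c = A (((finProdFinEquiv.symm r).1 : ℕ) + ((finProdFinEquiv.symm c).1 : ℕ) + s)
        (finProdFinEquiv.symm r).2 (finProdFinEquiv.symm c).2) :
    H = observabilityMatrix K C M * M ^ s * controllabilityMatrix K M B := by
  ext r c
  rw [hH, hA, observabilityMatrix_mul_mul_controllabilityMatrix_apply, add_right_comm,
    pow_add, pow_add]
  simp only [Matrix.mul_assoc]

theorem observabilityMatrix_mulVec_finProdFinEquiv (u : ι → R) (i : Fin K) (a : Fin n) :
    (observabilityMatrix K C M *ᵥ u) (finProdFinEquiv (i, a)) = ((C * M ^ (i : ℕ)) *ᵥ u) a := by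
  simp only [mulVec, observabilityMatrix, Equiv.symm_apply_apply]

theorem observabilityMatrix_mulVec_injective (hK : 0 < K) (hC : Function.Injective C.mulVec) :
    Function.Injective (observabilityMatrix K C M).mulVec := by
  intro u v huv
  apply hC
  funext a
  simpa [observabilityMatrix_mulVec_finProdFinEquiv] using
    congrFun huv (finProdFinEquiv (⟨0, hK⟩, a))

end Matrix

theorem hankel_pencil_eigenvalues_are_poles_general (n p K : ℕ)
    (hK : 0 < K)
    (lam : Fin p → ℂ)
    (D : Matrix (Fin p) (Fin p) ℂ) (d : Fin p → ℂ) (hd : ∀ k, d k ≠ 0)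
    (hD : D = Matrix.diagonal d)
    (V W : Matrix (Fin n) (Fin p) ℂ) (hV : V.rank = p)
    (A : ℕ → Matrix (Fin n) (Fin n) ℂ)
    (hA : ∀ α : ℕ, A α = V * D * (Matrix.diagonal lam) ^ α * Wᴴ)
    (H Hlt : Matrix (Fin (K * n)) (Fin (K * n)) ℂ)
    (hH : ∀ r c : Fin (K * n),
      H r c = A (((finProdFinEquiv.symm r).1 : ℕ) + ((finProdFinEquiv.symm c).1 : ℕ))
        (finProdFinEquiv.symm r).2 (finProdFinEquiv.symm c).2)
    (hHlt : ∀ r c : Fin (K * n),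
      Hlt r c = A (((finProdFinEquiv.symm r).1 : ℕ) + ((finProdFinEquiv.symm c).1 : ℕ) + 1)
        (finProdFinEquiv.symm r).2 (finProdFinEquiv.symm c).2)
    (μ : ℂ) (x : Fin (K * n) → ℂ)
    (hpencil : Hlt *ᵥ x = μ • (H *ᵥ x)) (hHx : H *ᵥ x ≠ 0) :
    ∃ k : Fin p, μ = lam k := by
  have hD_det : IsUnit D.det := by
    simpa [hD, det_diagonal, Finset.prod_ne_zero_iff] using hd
  have hVD : Function.Injective (V * D).mulVec :=
    mulVec_injective_of_rank_eq_card_s19 (by rw [rank_mul_eq_left_of_isUnit_det _ _ hD_det, hV,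
      Fintype.card_fin])
  have hH_eq := eq_observabilityMatrix_mul_controllabilityMatrix hA 0
    (fun r c => by rw [add_zero]; exact hH r c)
  have hHlt_eq := eq_observabilityMatrix_mul_controllabilityMatrix hA 1 hHlt
  rw [pow_zero, Matrix.mul_one] at hH_eq
  rw [pow_one] at hHlt_eq
  subst hH_eq hHlt_eq
  obtain ⟨k, hk⟩ := (hasEigenvalue_toLin'_diagonal_iff lam).1
    (hasEigenvalue_toLin'_of_factored_pencil (observabilityMatrix_mulVec_injective hK hVD)
      hpencil hHx)
  exact ⟨k, hk.symm⟩

theorem hankel_pencil_eigenvalues_are_poles (n p K : ℕ) (hn : 0 < n) (hp : 0 < p)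
    (hK : 0 < K) (hpK : p ≤ K * n)
    (lam : Fin p → ℂ) (hlam : Function.Injective lam)
    (D : Matrix (Fin p) (Fin p) ℂ) (d : Fin p → ℂ) (hd : ∀ k, d k ≠ 0)
    (hD : D = Matrix.diagonal d)
    (V W : Matrix (Fin n) (Fin p) ℂ) (hV : V.rank = p) (hW : W.rank = p)
    (A : ℕ → Matrix (Fin n) (Fin n) ℂ)
    (hA : ∀ α : ℕ, A α = V * D * (Matrix.diagonal lam) ^ α * Wᴴ)
    (H Hlt : Matrix (Fin (K * n)) (Fin (K * n)) ℂ)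
    (hH : ∀ r c : Fin (K * n),
      H r c = A (((finProdFinEquiv.symm r).1 : ℕ) + ((finProdFinEquiv.symm c).1 : ℕ))
        (finProdFinEquiv.symm r).2 (finProdFinEquiv.symm c).2)
    (hHlt : ∀ r c : Fin (K * n),
      Hlt r c = A (((finProdFinEquiv.symm r).1 : ℕ) + ((finProdFinEquiv.symm c).1 : ℕ) + 1)
        (finProdFinEquiv.symm r).2 (finProdFinEquiv.symm c).2)
    (μ : ℂ) (x : Fin (K * n) → ℂ) (hx : x ≠ 0)
    (hpencil : Hlt *ᵥ x = μ • (H *ᵥ x)) (hHx : H *ᵥ x ≠ 0) :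
    ∃ k : Fin p, μ = lam k :=
  hankel_pencil_eigenvalues_are_poles_general n p K hK lam D d hd hD V W hV A hA H Hlt hH hHlt μ x
    hpencil hHx
end
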